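/- Let h : ℝ → ℝ be a continuous 2π-periodic function that is Lipschitz with constant L. Then for every natural number k ≥ 1 there exists a trigonometric polynomial T of degree at most k such that ‖h − T‖_{C[−π,π]} ≤ (π/k)·L. -/

import Mathlib

/-!
Convolve `h` with the normalized Fejér–Korovkin kernel
`K t = |∑_{j ≤ k} sin ((j + 1) ε) e^{i j t}|²`, `ε = π / (k + 2)`. It is a nonnegative
trigonometric polynomial of degree `k`, so the convolution is one as well. Since `sin (j ε)`
satisfies the three-term recurrence `v j + v (j + 2) = 2 cos ε v (j + 1)` and vanishes at
`j = 0` and `j = k + 2`, one gets `∫ K cos = cos ε ∫ K`. The error at `x` is at most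
`L ∫ |t| K / ∫ K`, and the majorant `|t| sin ε ≤ a sin ε + cos ε - cos t` on `[-π, π]`,
valid for `a = π / k`, bounds this first moment by `a`: the part `cos ε - cos t` integrates
to zero against `K`.
-/

open Real Finset Function

def trigPoly (k : ℕ) : Submodule ℝ (ℝ → ℝ) where
  carrier := {f | ∃ A B : ℕ → ℝ, ∀ x,
    f x = A 0 + ∑ s ∈ Icc 1 k, (A s * cos (s * x) + B s * sin (s * x))}
  add_mem' := by
    rintro f g ⟨A, B, hf⟩ ⟨A', B', hg⟩
    refine ⟨A + A', B + B', fun x => ?_⟩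
    simp only [Pi.add_apply, hf, hg, add_mul, sum_add_distrib]
    ring
  zero_mem' := ⟨0, 0, by simp⟩
  smul_mem' := by
    rintro c f ⟨A, B, hf⟩
    refine ⟨c • A, c • B, fun x => ?_⟩
    simp only [Pi.smul_apply, smul_eq_mul, hf, mul_add, mul_sum, mul_assoc]

lemma Function.Periodic.intervalIntegral_comp_sub {g : ℝ → ℝ} (hg : Periodic g (2 * π)) (x : ℝ) :
    ∫ t in -π..π, g (x - t) = ∫ t in -π..π, g t := by
  rw [intervalIntegral.integral_comp_sub_left g x]
  simpa [sub_neg_eq_add, two_mul, ← add_assoc] using hg.intervalIntegral_add_eq (x - π) (-π)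

namespace trigPoly

variable {k : ℕ} {f : ℝ → ℝ}

lemma cos_natCast_mul_mem {s : ℕ} (hs : s ≤ k) : (fun x => cos (s * x)) ∈ trigPoly k := by
  refine ⟨fun i => if i = s then 1 else 0, 0, fun x => ?_⟩
  simp only [ite_mul, one_mul, zero_mul, Pi.zero_apply, add_zero, sum_ite_eq', mem_Icc]
  rcases Nat.eq_zero_or_pos s with rfl | hs0
  · simp
  · simp [hs0.ne, Nat.one_le_iff_ne_zero.2 hs0.ne', hs]

lemma cos_natCast_sub_mul_mem {j l : ℕ} (hj : j ≤ k) (hl : l ≤ k) :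
    (fun x => cos ((j - l : ℝ) * x)) ∈ trigPoly k := by
  rcases le_total l j with hlj | hjl
  · convert cos_natCast_mul_mem (k := k) (s := j - l) (by omega) using 4
    rw [Nat.cast_sub hlj]
  · convert cos_natCast_mul_mem (k := k) (s := l - j) (by omega) using 2 with x
    rw [Nat.cast_sub hjl, ← cos_neg, ← neg_mul, neg_sub]

lemma continuous_of_mem (hf : f ∈ trigPoly k) : Continuous f := by
  obtain ⟨A, B, hAB⟩ := hf
  rw [funext hAB]
  fun_prop

lemma periodic_of_mem (hf : f ∈ trigPoly k) : Periodic f (2 * π) := by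
  obtain ⟨A, B, hAB⟩ := hf
  intro x
  simp only [hAB, mul_add, cos_add_nat_mul_two_pi, sin_add_nat_mul_two_pi]

lemma integral_mul_comp_sub_mem {h : ℝ → ℝ} (hh : Continuous h) (hf : f ∈ trigPoly k) :
    (fun x => ∫ u in -π..π, h u * f (x - u)) ∈ trigPoly k := by
  obtain ⟨A, B, hAB⟩ := hf
  refine ⟨fun s => ∫ u in -π..π, h u * (A s * cos (s * u) - B s * sin (s * u)),
    fun s => ∫ u in -π..π, h u * (A s * sin (s * u) + B s * cos (s * u)), fun x => ?_⟩
  have hexpand : ∀ u, h u * f (x - u) = h u * A 0 + ∑ s ∈ Icc 1 k,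
      (cos (s * x) * (h u * (A s * cos (s * u) - B s * sin (s * u)))
        + sin (s * x) * (h u * (A s * sin (s * u) + B s * cos (s * u)))) := fun u => by
    simp only [hAB, mul_add, mul_sum, mul_sub, cos_sub, sin_sub]
    congr 1
    exact sum_congr rfl fun s _ => by ring
  have hint : ∀ g : ℝ → ℝ, Continuous g → IntervalIntegrable g MeasureTheory.volume (-π) π :=
    fun g hg => hg.intervalIntegrable _ _
  simp only [hexpand]
  rw [intervalIntegral.integral_add (hint _ (by fun_prop)) (hint _ (by fun_prop)),
    intervalIntegral.integral_finsetSum fun s _ => hint _ (by fun_prop)]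
  congr 1
  · simp
  refine sum_congr rfl fun s _ => ?_
  rw [intervalIntegral.integral_add (hint _ (by fun_prop)) (hint _ (by fun_prop)),
    intervalIntegral.integral_const_mul, intervalIntegral.integral_const_mul]
  ring

lemma integral_comp_sub_mul_mem {h : ℝ → ℝ} (hh : Continuous h) (hper : Periodic h (2 * π))
    (hf : f ∈ trigPoly k) : (fun x => ∫ t in -π..π, h (x - t) * f t) ∈ trigPoly k := by
  convert integral_mul_comp_sub_mem hh hf using 2 with x
  simpa using (hper.mul ((periodic_of_mem hf).const_sub x)).intervalIntegral_comp_sub x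

end trigPoly

lemma integral_cos_natCast_sub_mul (j l : ℕ) :
    ∫ t in -π..π, cos ((j - l : ℝ) * t) = if j = l then 2 * π else 0 := by
  split_ifs with hjl
  · simp [hjl, two_mul]
  have hd : (j - l : ℝ) = ((j - l : ℤ) : ℝ) := by push_cast; rfl
  have hd0 : (j - l : ℝ) ≠ 0 := sub_ne_zero.2 (by exact_mod_cast hjl)
  rw [intervalIntegral.integral_comp_mul_left (fun t => cos t) hd0, integral_cos, mul_neg,
    sin_neg, hd, sin_int_mul_pi]
  simp

lemma integral_cos_natCast_sub_mul_mul_cos (j l : ℕ) :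
    ∫ t in -π..π, cos ((j - l : ℝ) * t) * cos t
      = (if j + 1 = l then π else 0) + (if j = l + 1 then π else 0) := by
  -- the shifted indices stay natural numbers, so that the orthogonality above applies
  have hprod : ∀ t, cos ((j - l : ℝ) * t) * cos t
      = cos (((j + 1 : ℕ) - l : ℝ) * t) / 2 + cos ((j - (l + 1 : ℕ) : ℝ) * t) / 2 := fun t => by
    push_cast
    rw [show ((j + 1 - l : ℝ)) * t = (j - l) * t + t by ring,
      show ((j - (l + 1) : ℝ)) * t = (j - l) * t - t by ring, cos_add, cos_sub]
    ring
  simp only [hprod]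
  rw [intervalIntegral.integral_add ((by fun_prop : Continuous _).intervalIntegrable _ _)
      ((by fun_prop : Continuous _).intervalIntegrable _ _), intervalIntegral.integral_div,
    intervalIntegral.integral_div, integral_cos_natCast_sub_mul, integral_cos_natCast_sub_mul]
  split_ifs <;> ring

lemma integral_sum_sum_const_mul {ι : Type*} (s : Finset ι) {a b : ℝ} (w : ι → ι → ℝ)
    (g : ι → ι → ℝ → ℝ) (hg : ∀ i j, Continuous (g i j)) :
    ∫ t in a..b, ∑ i ∈ s, ∑ j ∈ s, w i j * g i j t
      = ∑ i ∈ s, ∑ j ∈ s, w i j * ∫ t in a..b, g i j t := by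
  have hint : ∀ i j, IntervalIntegrable (fun t => w i j * g i j t) MeasureTheory.volume a b :=
    fun i j => ((hg i j).const_mul _).intervalIntegrable _ _
  rw [intervalIntegral.integral_finsetSum (f := fun i t => ∑ j ∈ s, w i j * g i j t) fun i _ =>
    (continuous_finsetSum s fun j _ => (hg i j).const_mul _).intervalIntegrable _ _]
  refine sum_congr rfl fun i _ => ?_
  rw [intervalIntegral.integral_finsetSum fun j _ => hint i j]
  simp only [intervalIntegral.integral_const_mul]

lemma sum_range_succ_sum_ite_succ_eq (n : ℕ) (f : ℕ → ℕ → ℝ) :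
    ∑ j ∈ range (n + 1), ∑ l ∈ range (n + 1), (if j + 1 = l then f j l else 0)
      = ∑ j ∈ range n, f j (j + 1) := by
  simp only [sum_ite_eq, mem_range]
  rw [sum_range_succ, if_neg (by omega), add_zero]
  exact sum_congr rfl fun j hj => if_pos (by simpa using hj)

noncomputable def normSqTrigSum (n : ℕ) (c : ℕ → ℝ) (t : ℝ) : ℝ :=
  (∑ j ∈ range (n + 1), c j * cos (j * t)) ^ 2 + (∑ j ∈ range (n + 1), c j * sin (j * t)) ^ 2

namespace normSqTrigSum

variable (n : ℕ) (c : ℕ → ℝ)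

lemma nonneg (t : ℝ) : 0 ≤ normSqTrigSum n c t := by
  unfold normSqTrigSum
  positivity

lemma eq_sum_cos (t : ℝ) : normSqTrigSum n c t
    = ∑ j ∈ range (n + 1), ∑ l ∈ range (n + 1), c j * c l * cos ((j - l : ℝ) * t) := by
  simp only [normSqTrigSum, sq, sum_mul_sum, ← sum_add_distrib, sub_mul, cos_sub]
  exact sum_congr rfl fun j _ => sum_congr rfl fun l _ => by ring

lemma integral :
    ∫ t in -π..π, normSqTrigSum n c t = 2 * π * ∑ j ∈ range (n + 1), c j ^ 2 := by
  simp only [eq_sum_cos]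
  rw [integral_sum_sum_const_mul _ (fun j l => c j * c l) (fun (j l : ℕ) t => cos ((j - l : ℝ) * t))
    fun j l => by fun_prop]
  simp only [integral_cos_natCast_sub_mul, mul_ite, mul_zero, sum_ite_eq, mem_range, mul_sum]
  exact sum_congr rfl fun j hj => by rw [if_pos (mem_range.1 hj)]; ring

lemma integral_mul_cos : ∫ t in -π..π, normSqTrigSum n c t * cos t
    = 2 * π * ∑ j ∈ range n, c j * c (j + 1) := by
  simp_rw [eq_sum_cos, sum_mul, mul_assoc (c _ * c _)]
  rw [integral_sum_sum_const_mul _ (fun j l => c j * c l)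
    (fun (j l : ℕ) t => cos ((j - l : ℝ) * t) * cos t) fun j l => by fun_prop]
  simp only [integral_cos_natCast_sub_mul_mul_cos, mul_add, sum_add_distrib, mul_ite, mul_zero]
  rw [sum_comm (s := range (n + 1)) (t := range (n + 1))
    (f := fun j l => if j = l + 1 then _ else _)]
  simp_rw [eq_comm (b := _ + 1)]
  rw [sum_range_succ_sum_ite_succ_eq n (fun j l => c j * c l * π),
    sum_range_succ_sum_ite_succ_eq n (fun j l => c l * c j * π), ← sum_add_distrib, mul_sum]
  exact sum_congr rfl fun j _ => by ring

lemma mem_trigPoly : normSqTrigSum n c ∈ trigPoly n := by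
  have hsum : normSqTrigSum n c = ∑ j ∈ range (n + 1), ∑ l ∈ range (n + 1),
      (c j * c l) • fun t => cos ((j - l : ℝ) * t) := by
    ext t
    simp [eq_sum_cos, Finset.sum_apply]
  rw [hsum]
  exact Submodule.sum_mem _ fun j hj => Submodule.sum_mem _ fun l hl => Submodule.smul_mem _ _
    (trigPoly.cos_natCast_sub_mul_mem (by simpa [Nat.lt_succ_iff] using hj)
      (by simpa [Nat.lt_succ_iff] using hl))

lemma continuous : Continuous (normSqTrigSum n c) := by
  unfold normSqTrigSum
  fun_prop

end normSqTrigSum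

lemma cos_sub_cos_le_of_sin_le {a b c : ℝ} (hab : a ≤ b) (h : ∀ s ∈ Set.Icc a b, sin s ≤ c) :
    cos a - cos b ≤ (b - a) * c := by
  simpa [integral_sin] using intervalIntegral.integral_mono_on hab
    (continuous_sin.intervalIntegrable (μ := MeasureTheory.volume) _ _) intervalIntegrable_const h

lemma le_cos_sub_cos_of_le_sin {a b c : ℝ} (hab : a ≤ b) (h : ∀ s ∈ Set.Icc a b, c ≤ sin s) :
    (b - a) * c ≤ cos a - cos b := by
  simpa [integral_sin] using intervalIntegral.integral_mono_on hab
    intervalIntegrable_const (continuous_sin.intervalIntegrable (μ := MeasureTheory.volume) _ _) h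

/- `φ t = a sin ε + cos ε - cos t - t sin ε` has `φ' t = sin t - sin ε`, so it decreases on
`[0, ε]`, increases on `[ε, π - ε]` and decreases on `[π - ε, π]`; moreover `φ ε ≥ 0` as `ε ≤ a`
and `φ π ≥ 0` is `hend`. -/
lemma mul_sin_le_of_nonneg_of_le_pi {ε a t : ℝ} (hε : 0 < ε) (hεπ : ε ≤ π / 2) (hεa : ε ≤ a)
    (hend : (π - a) * sin ε ≤ 1 + cos ε) (ht₀ : 0 ≤ t) (htπ : t ≤ π) :
    t * sin ε ≤ a * sin ε + cos ε - cos t := by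
  have hsin : 0 ≤ sin ε := sin_nonneg_of_nonneg_of_le_pi hε.le (by linarith)
  have hεa' : ε * sin ε ≤ a * sin ε := mul_le_mul_of_nonneg_right hεa hsin
  rcases le_total t ε with htε | hεt
  · have := cos_sub_cos_le_of_sin_le htε fun s hs =>
      sin_le_sin_of_le_of_le_pi_div_two (by linarith [hs.1]) hεπ hs.2
    linarith
  rcases le_total t (π - ε) with htπε | hπεt
  · have := le_cos_sub_cos_of_le_sin hεt fun s hs => by
      rcases le_total s (π / 2) with hs2 | hs2
      · exact sin_le_sin_of_le_of_le_pi_div_two (by linarith) hs2 hs.1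
      · rw [← sin_pi_sub s]
        exact sin_le_sin_of_le_of_le_pi_div_two (by linarith) (by linarith) (by linarith [hs.2])
    linarith
  · have := cos_sub_cos_le_of_sin_le htπ fun s hs => by
      rw [← sin_pi_sub s]
      exact sin_le_sin_of_le_of_le_pi_div_two (by linarith [hs.2]) hεπ (by linarith [hs.1])
    rw [cos_pi] at this
    nlinarith

lemma pi_sub_pi_div_mul_sin_le (k : ℕ) (hk : 1 ≤ k) :
    (π - π / k) * sin (π / (k + 2)) ≤ 1 + cos (π / (k + 2)) := by
  have hk' : (1 : ℝ) ≤ k := by exact_mod_cast hk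
  set ε := π / (k + 2) with hε
  have hε0 : 0 ≤ ε := by positivity
  have hπ := pi_lt_d2
  have hπ0 := pi_pos
  have hsin : sin ε ≤ ε := sin_le hε0
  have hcos : 1 - ε ^ 2 / 2 ≤ cos ε := one_sub_sq_div_two_le_cos
  have hsin0 : 0 ≤ sin ε := sin_nonneg_of_nonneg_of_le_pi hε0 (by
    rw [hε, div_le_iff₀ (by positivity)]; nlinarith)
  have hπk : π / k ≤ π := div_le_self hπ0.le hk'
  -- with `sin ε ≤ ε` and `1 - ε² / 2 ≤ cos ε`, a polynomial inequality in `k` once `π² ≤ 10`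
  have key : (π - π / k) * ε ≤ 2 - ε ^ 2 / 2 := by
    rw [hε]
    field_simp
    have hπ2 : π ^ 2 ≤ 10 := by nlinarith
    nlinarith [mul_le_mul_of_nonneg_right hπ2 (by nlinarith : (0:ℝ) ≤ (k - 1) * 2 * (k + 2)),
      mul_nonneg (mul_nonneg (sub_nonneg.2 hk') (sub_nonneg.2 hk')) (by positivity : (0:ℝ) ≤ k)]
  nlinarith [mul_le_mul_of_nonneg_left hsin (sub_nonneg.2 hπk)]

lemma integral_abs_mul_le_of_mul_sin_le {K : ℝ → ℝ} (hK : Continuous K) (hK0 : ∀ t, 0 ≤ K t)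
    {ε a : ℝ} (hε : 0 < sin ε) (hKcos : ∫ t in -π..π, K t * cos t = cos ε * ∫ t in -π..π, K t)
    (hmaj : ∀ t ∈ Set.Icc (-π) π, |t| * sin ε ≤ a * sin ε + cos ε - cos t) :
    ∫ t in -π..π, |t| * K t ≤ a * ∫ t in -π..π, K t := by
  refine le_of_mul_le_mul_right ?_ hε
  calc (∫ t in -π..π, |t| * K t) * sin ε = ∫ t in -π..π, (|t| * sin ε) * K t := by
        rw [← intervalIntegral.integral_mul_const]
        exact intervalIntegral.integral_congr fun t _ => by ring
    _ ≤ ∫ t in -π..π, (a * sin ε + cos ε - cos t) * K t :=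
        intervalIntegral.integral_mono_on (by linarith [pi_pos])
          ((by fun_prop : Continuous _).intervalIntegrable _ _)
          ((by fun_prop : Continuous _).intervalIntegrable _ _)
          fun t ht => mul_le_mul_of_nonneg_right (hmaj t ht) (hK0 t)
    _ = (a * sin ε + cos ε) * (∫ t in -π..π, K t) - ∫ t in -π..π, K t * cos t := by
        rw [← intervalIntegral.integral_const_mul, ← intervalIntegral.integral_sub
          ((by fun_prop : Continuous _).intervalIntegrable _ _)
          ((by fun_prop : Continuous _).intervalIntegrable _ _)]
        exact intervalIntegral.integral_congr fun t _ => by ring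
    _ = (a * ∫ t in -π..π, K t) * sin ε := by rw [hKcos]; ring

lemma abs_sub_integral_div_le {h : ℝ → ℝ} {L : NNReal} (hlip : LipschitzWith L h) {K : ℝ → ℝ}
    (hK : Continuous K) (hK0 : ∀ t, 0 ≤ K t) (hKpos : 0 < ∫ t in -π..π, K t) {a : ℝ}
    (hmom : ∫ t in -π..π, |t| * K t ≤ a * ∫ t in -π..π, K t) (x : ℝ) :
    |h x - (∫ t in -π..π, h (x - t) * K t) / ∫ t in -π..π, K t| ≤ L * a := by
  have hcont := hlip.continuous
  have hπ : -π ≤ π := by linarith [pi_pos]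
  have herr : h x - (∫ t in -π..π, h (x - t) * K t) / ∫ t in -π..π, K t
      = (∫ t in -π..π, (h x - h (x - t)) * K t) / ∫ t in -π..π, K t := by
    rw [eq_div_iff hKpos.ne', sub_mul, div_mul_cancel₀ _ hKpos.ne',
      ← intervalIntegral.integral_const_mul,
      ← intervalIntegral.integral_sub ((by fun_prop : Continuous _).intervalIntegrable _ _)
        ((by fun_prop : Continuous _).intervalIntegrable _ _)]
    exact intervalIntegral.integral_congr fun t _ => by ring
  rw [herr, abs_div, abs_of_pos hKpos, div_le_iff₀ hKpos]
  calc |∫ t in -π..π, (h x - h (x - t)) * K t|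
      ≤ ∫ t in -π..π, |(h x - h (x - t)) * K t| := intervalIntegral.abs_integral_le_integral_abs hπ
    _ ≤ ∫ t in -π..π, L * (|t| * K t) := by
        refine intervalIntegral.integral_mono_on hπ
          ((by fun_prop : Continuous _).intervalIntegrable _ _)
          ((by fun_prop : Continuous _).intervalIntegrable _ _) fun t _ => ?_
        rw [abs_mul, abs_of_nonneg (hK0 t), ← mul_assoc]
        refine mul_le_mul_of_nonneg_right ?_ (hK0 t)
        simpa [Real.dist_eq] using hlip.dist_le_mul x (x - t)
    _ ≤ L * a * ∫ t in -π..π, K t := by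
        rw [intervalIntegral.integral_const_mul, mul_assoc]
        exact mul_le_mul_of_nonneg_left hmom L.coe_nonneg

lemma sum_mul_succ_eq_of_recurrence {v : ℕ → ℝ} {r : ℝ} (n : ℕ) (h0 : v 0 = 0)
    (hn : v (n + 2) = 0) (hrec : ∀ j, v j + v (j + 2) = 2 * r * v (j + 1)) :
    ∑ j ∈ range n, v (j + 1) * v (j + 2) = r * ∑ j ∈ range (n + 1), v (j + 1) ^ 2 := by
  have key : ∑ j ∈ range (n + 1), (v (j + 1) * v j + v (j + 1) * v (j + 2))
      = 2 * r * ∑ j ∈ range (n + 1), v (j + 1) ^ 2 := by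
    rw [mul_sum]
    exact sum_congr rfl fun j _ => by rw [← mul_add, hrec]; ring
  rw [sum_add_distrib, sum_range_succ', sum_range_succ _ n, h0, hn] at key
  simp only [mul_zero, add_zero, mul_comm (v (_ + 2))] at key
  linarith

noncomputable def korovkinKernel (k : ℕ) : ℝ → ℝ :=
  normSqTrigSum k fun j => sin ((j + 1 : ℕ) * (π / (k + 2)))

namespace korovkinKernel

variable (k : ℕ)

lemma mem_trigPoly : korovkinKernel k ∈ trigPoly k := normSqTrigSum.mem_trigPoly k _

lemma continuous : Continuous (korovkinKernel k) := normSqTrigSum.continuous k _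

lemma nonneg (t : ℝ) : 0 ≤ korovkinKernel k t := normSqTrigSum.nonneg k _ t

lemma integral_pos : 0 < ∫ t in -π..π, korovkinKernel k t := by
  have hsin : 0 < sin (π / (k + 2)) :=
    sin_pos_of_pos_of_lt_pi (by positivity) (div_lt_self pi_pos (by linarith))
  rw [korovkinKernel, normSqTrigSum.integral]
  refine mul_pos (by positivity) (lt_of_lt_of_le ?_
    (single_le_sum (fun j _ => sq_nonneg _) (mem_range.2 k.succ_pos)))
  simpa using pow_pos hsin 2

lemma integral_mul_cos : ∫ t in -π..π, korovkinKernel k t * cos t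
    = cos (π / (k + 2)) * ∫ t in -π..π, korovkinKernel k t := by
  set ε := π / (k + 2) with hε
  have hrec : ∀ j : ℕ, sin (j * ε) + sin ((j + 2 : ℕ) * ε) = 2 * cos ε * sin ((j + 1 : ℕ) * ε) :=
    fun j => by
      push_cast
      rw [show (j + 2 : ℝ) * ε = (j + 1) * ε + ε by ring,
        show (j : ℝ) * ε = (j + 1) * ε - ε by ring, sin_add, sin_sub]
      ring
  have hend : sin ((k + 2 : ℕ) * ε) = 0 := by
    rw [hε, Nat.cast_add, Nat.cast_two, mul_div_cancel₀ _ (by positivity), sin_pi]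
  have := sum_mul_succ_eq_of_recurrence (v := fun j => sin (j * ε)) k (by simp) hend hrec
  rw [korovkinKernel, normSqTrigSum.integral_mul_cos, normSqTrigSum.integral, mul_left_comm,
    ← this]

lemma integral_abs_mul_le (hk : 1 ≤ k) :
    ∫ t in -π..π, |t| * korovkinKernel k t ≤ π / k * ∫ t in -π..π, korovkinKernel k t := by
  have hk' : (1 : ℝ) ≤ k := by exact_mod_cast hk
  have hε : 0 < π / (k + 2) := by positivity
  refine integral_abs_mul_le_of_mul_sin_le (continuous k) (nonneg k)
    (sin_pos_of_pos_of_lt_pi hε (div_lt_self pi_pos (by linarith))) (integral_mul_cos k)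
    fun t ht => ?_
  rw [← cos_abs t]
  refine mul_sin_le_of_nonneg_of_le_pi hε ?_ ?_ (pi_sub_pi_div_mul_sin_le k hk) (abs_nonneg t)
    (abs_le.2 ht)
  · exact div_le_div_of_nonneg_left pi_pos.le two_pos (by linarith)
  · exact div_le_div_of_nonneg_left pi_pos.le (by positivity) (by linarith)

end korovkinKernel

theorem jackson_lipschitz_general (h : ℝ → ℝ) (L : NNReal)
    (hper : Function.Periodic h (2 * π))
    (hlip : LipschitzWith L h) (k : ℕ) (hk : 1 ≤ k) :
    ∃ A B : ℕ → ℝ, ∀ x ∈ Set.Icc (-π) π,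
      |h x - (A 0 + ∑ s ∈ Finset.Icc 1 k, (A s * Real.cos (s * x) + B s * Real.sin (s * x)))|
        ≤ (π / k) * L := by
  obtain ⟨A, B, hAB⟩ := (trigPoly k).smul_mem (∫ t in -π..π, korovkinKernel k t)⁻¹
    (trigPoly.integral_comp_sub_mul_mem hlip.continuous hper (korovkinKernel.mem_trigPoly k))
  refine ⟨A, B, fun x _ => ?_⟩
  rw [← hAB x, Pi.smul_apply, smul_eq_mul, ← div_eq_inv_mul, mul_comm]
  exact abs_sub_integral_div_le hlip (korovkinKernel.continuous k) (korovkinKernel.nonneg k)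
    (korovkinKernel.integral_pos k) (korovkinKernel.integral_abs_mul_le k hk) x

theorem jackson_lipschitz (h : ℝ → ℝ) (L : NNReal)
    (hcont : Continuous h) (hper : Function.Periodic h (2 * π))
    (hlip : LipschitzWith L h) (k : ℕ) (hk : 1 ≤ k) :
    ∃ A B : ℕ → ℝ, ∀ x ∈ Set.Icc (-π) π,
      |h x - (A 0 + ∑ s ∈ Finset.Icc 1 k, (A s * Real.cos (s * x) + B s * Real.sin (s * x)))|
        ≤ (π / k) * L :=
  jackson_lipschitz_general h L hper hlip k hk
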